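/- Let 0 < α < 1/4, C_{α,N} = (∑_{|n| ≤ N} 2⟨n⟩^{-4α})^{-1/4}, and fix n ∈ ℤ. Then the limit c_α := lim_{N→∞} C_{α,N}⁴ ∑_{n₁ + n₂ = n, |n₁|,|n₂| ≤ N} 2⟨n₁⟩^{-2α}⟨n₂⟩^{-2α} exists and equals 1, independently of n. -/

import Mathlib

/-!
Writing `f k = 2⟨k⟩^{-4α}` and `S_N = ∑_{|k| ≤ N} f k = C_{α,N}^{-4}`, the pair sum is
`∑ f k · (⟨k⟩/⟨n - k⟩)^{2α}` over `|k| ≤ N`, up to at most `|n|` boundary terms that are each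
at most `2`. Since `⟨·⟩` is `1`-Lipschitz, `⟨k⟩/⟨n - k⟩ → 1` as `|k| → ∞`, and since `4α ≤ 1`
the weights diverge like the harmonic series, `S_N → ∞`. A Toeplitz-type averaging argument then
shows the pair sum is asymptotically equivalent to `S_N`.
-/

open Filter

/-- The Japanese bracket `⟨n⟩ = √(1 + n²)`. -/
noncomputable def jbr (n : ℤ) : ℝ := Real.sqrt (1 + (n : ℝ) ^ 2)

/-- The renormalization constant `C_{α,N} = (∑_{|n| ≤ N} 2 ⟨n⟩^{-4α})^{-1/4}`. -/
noncomputable def renC (α : ℝ) (N : ℕ) : ℝ :=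
  (∑ n ∈ Finset.Icc (-(N : ℤ)) (N : ℤ), 2 / jbr n ^ (4 * α)) ^ (-(1 / 4 : ℝ))

/-- The set of pairs `(n₁, n₂)` with `|n₁|, |n₂| ≤ N` and `n₁ + n₂ = n`. -/
noncomputable def pairSet (N : ℕ) (n : ℤ) : Finset (ℤ × ℤ) :=
  ((Finset.Icc (-(N : ℤ)) (N : ℤ)) ×ˢ (Finset.Icc (-(N : ℤ)) (N : ℤ))).filter
    (fun p => p.1 + p.2 = n)

open Asymptotics Topology Finset

theorem isEquivalent_sum_mul_of_tendsto_one {ι β : Type*} {l : Filter β} {f w : ι → ℝ}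
    (hf : ∀ i, 0 ≤ f i) (hw : Tendsto w cofinite (𝓝 1)) {s : β → Finset ι}
    (hs : Tendsto (fun b => ∑ i ∈ s b, f i) l atTop) :
    (fun b => ∑ i ∈ s b, f i * w i) ~[l] fun b => ∑ i ∈ s b, f i := by
  classical
  rw [IsEquivalent, isLittleO_iff]
  intro c hc
  have hfin : {i | ¬ |w i - 1| ≤ c / 2}.Finite := by
    refine eventually_cofinite.1 ?_
    filter_upwards [hw (Metric.closedBall_mem_nhds 1 (half_pos hc))] with i hi
    simpa [Real.dist_eq] using hi
  -- The finitely many `i` with `|w i - 1| > c / 2` contribute a fixed amount `C`, which is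
  -- eventually at most `c / 2 · ∑ f`.
  set F := hfin.toFinset
  set C := ∑ i ∈ F, f i * |w i - 1|
  filter_upwards [hs.eventually_ge_atTop (2 * C / c)] with b hb
  have hpoint : ∀ i, f i * |w i - 1| ≤ c / 2 * f i + if i ∈ F then f i * |w i - 1| else 0 := by
    intro i
    split_ifs with hi
    · nlinarith [hf i]
    · have : |w i - 1| ≤ c / 2 := by simpa [F] using hi
      nlinarith [hf i]
  have hexcess : ∑ i ∈ s b ∩ F, f i * |w i - 1| ≤ C :=
    sum_le_sum_of_subset_of_nonneg inter_subset_right fun i _ _ => by positivity [hf i]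
  have hS : 0 ≤ ∑ i ∈ s b, f i := sum_nonneg fun i _ => hf i
  calc ‖∑ i ∈ s b, f i * w i - ∑ i ∈ s b, f i‖
      = |∑ i ∈ s b, f i * (w i - 1)| := by
        simp only [Real.norm_eq_abs, mul_sub, mul_one, sum_sub_distrib]
    _ ≤ ∑ i ∈ s b, f i * |w i - 1| := by
        refine (abs_sum_le_sum_abs _ _).trans_eq (sum_congr rfl fun i _ => ?_)
        rw [abs_mul, abs_of_nonneg (hf i)]
    _ ≤ ∑ i ∈ s b, (c / 2 * f i + if i ∈ F then f i * |w i - 1| else 0) :=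
        sum_le_sum fun i _ => hpoint i
    _ ≤ c / 2 * ∑ i ∈ s b, f i + C := by
        rw [sum_add_distrib, ← mul_sum, sum_ite_mem]
        linarith
    _ ≤ c * ‖∑ i ∈ s b, f i‖ := by
        rw [Real.norm_eq_abs, abs_of_nonneg hS]
        rw [div_le_iff₀ hc] at hb
        linarith

theorem isEquivalent_of_sub_isBigO_one {α : Type*} {l : Filter α} {a b : α → ℝ}
    (hab : (fun x => a x - b x) =O[l] fun _ => (1 : ℝ)) (hb : Tendsto b l atTop) : a ~[l] b :=
  hab.trans_isLittleO ((isLittleO_one_left_iff ℝ).2 (tendsto_abs_atTop_atTop.comp hb))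

theorem tendsto_div_nhds_one_of_abs_sub_le {α : Type*} {l : Filter α} {a b : α → ℝ} {C : ℝ}
    (hab : ∀ x, |a x - b x| ≤ C) (hb : Tendsto b l atTop) :
    Tendsto (fun x => a x / b x) l (𝓝 1) :=
  (isEquivalent_iff_tendsto_one ((hb.eventually_gt_atTop 0).mono fun _ => ne_of_gt)).1 <|
    isEquivalent_of_sub_isBigO_one
      (IsBigO.of_bound C (Eventually.of_forall fun x => by simpa using hab x)) hb

theorem jbr_eq_norm (k : ℤ) : jbr k = ‖((1 : ℝ) : ℂ) + ((k : ℝ) : ℂ) * Complex.I‖ := by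
  rw [Complex.norm_add_mul_I, one_pow, jbr]

theorem one_le_jbr (k : ℤ) : 1 ≤ jbr k :=
  Real.one_le_sqrt.2 (le_add_of_nonneg_right (sq_nonneg _))

theorem jbr_pos (k : ℤ) : 0 < jbr k := one_pos.trans_le (one_le_jbr k)

theorem jbr_neg (k : ℤ) : jbr (-k) = jbr k := by simp [jbr]

theorem abs_le_jbr (k : ℤ) : |(k : ℝ)| ≤ jbr k :=
  Real.abs_le_sqrt (le_add_of_nonneg_left zero_le_one)

theorem jbr_le_one_add_abs (k : ℤ) : jbr k ≤ 1 + |(k : ℝ)| :=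
  Real.sqrt_le_iff.2 ⟨by positivity, by nlinarith [abs_nonneg (k : ℝ), sq_abs (k : ℝ)]⟩

theorem abs_jbr_sub_jbr_le (a b : ℤ) : |jbr a - jbr b| ≤ |(a : ℝ) - b| := by
  rw [jbr_eq_norm, jbr_eq_norm]
  refine (abs_norm_sub_norm_le _ _).trans_eq ?_
  rw [add_sub_add_left_eq_sub, ← sub_mul, ← Complex.ofReal_sub, norm_mul, Complex.norm_I,
    mul_one, Complex.norm_real, Real.norm_eq_abs]

theorem tendsto_jbr_cofinite_atTop : Tendsto jbr cofinite atTop :=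
  tendsto_atTop_mono abs_le_jbr <| by
    simpa only [Function.comp_def, Real.norm_eq_abs] using
      tendsto_norm_cocompact_atTop.comp Int.tendsto_coe_cofinite

theorem tendsto_jbr_div_jbr_sub (n : ℤ) :
    Tendsto (fun k => jbr k / jbr (n - k)) cofinite (𝓝 1) := by
  refine tendsto_div_nhds_one_of_abs_sub_le (C := |(n : ℝ)|) (fun k => ?_)
    (tendsto_jbr_cofinite_atTop.comp (sub_right_injective.tendsto_cofinite))
  rw [← jbr_neg (n - k), neg_sub]
  refine (abs_jbr_sub_jbr_le _ _).trans_eq ?_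
  push_cast
  ring_nf

theorem two_div_jbr_rpow_pos (β : ℝ) (k : ℤ) : 0 < 2 / jbr k ^ β :=
  div_pos two_pos (Real.rpow_pos_of_pos (jbr_pos k) β)

theorem abs_two_mul_jbr_rpow_mul_jbr_rpow_le {α : ℝ} (hα : 0 ≤ α) (a b : ℤ) :
    |2 * jbr a ^ (-(2 * α)) * jbr b ^ (-(2 * α))| ≤ 2 := by
  have ha := Real.rpow_le_one_of_one_le_of_nonpos (one_le_jbr a) (by linarith : -(2 * α) ≤ 0)
  have hb := Real.rpow_le_one_of_one_le_of_nonpos (one_le_jbr b) (by linarith : -(2 * α) ≤ 0)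
  have ha₀ := Real.rpow_pos_of_pos (jbr_pos a) (-(2 * α))
  have hb₀ := Real.rpow_pos_of_pos (jbr_pos b) (-(2 * α))
  rw [abs_of_pos (by positivity)]
  nlinarith

theorem two_mul_jbr_rpow_mul_jbr_rpow (α : ℝ) (a b : ℤ) :
    2 * jbr a ^ (-(2 * α)) * jbr b ^ (-(2 * α)) =
      2 / jbr a ^ (4 * α) * (jbr a / jbr b) ^ (2 * α) := by
  have ha := jbr_pos a
  have hb := jbr_pos b
  have ha' := Real.rpow_pos_of_pos ha (2 * α)
  have hb' := Real.rpow_pos_of_pos hb (2 * α)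
  rw [Real.rpow_neg ha.le, Real.rpow_neg hb.le, Real.div_rpow ha.le hb.le,
    show 4 * α = 2 * α + 2 * α by ring, Real.rpow_add ha]
  field_simp

theorem tendsto_sum_Icc_two_div_jbr_rpow_atTop {β : ℝ} (hβ : β ≤ 1) :
    Tendsto (fun N : ℕ => ∑ k ∈ Icc (-(N : ℤ)) N, 2 / jbr k ^ β) atTop atTop := by
  refine tendsto_atTop_mono (fun N => ?_) Real.tendsto_sum_range_one_div_nat_succ_atTop
  have hterm : ∀ i : ℕ, 1 / ((i : ℝ) + 1) ≤ 2 / jbr i ^ β := by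
    intro i
    have hpow : jbr i ^ β ≤ (i : ℝ) + 1 :=
      calc jbr i ^ β ≤ jbr i ^ (1 : ℝ) := Real.rpow_le_rpow_of_exponent_le (one_le_jbr i) hβ
        _ ≤ 1 + |((i : ℤ) : ℝ)| := by rw [Real.rpow_one]; exact jbr_le_one_add_abs i
        _ = (i : ℝ) + 1 := by push_cast; rw [abs_of_nonneg i.cast_nonneg, add_comm]
    calc 1 / ((i : ℝ) + 1) ≤ 1 / jbr i ^ β :=
          one_div_le_one_div_of_le (Real.rpow_pos_of_pos (jbr_pos i) β) hpow
      _ ≤ 2 / jbr i ^ β :=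
          div_le_div_of_nonneg_right one_le_two (Real.rpow_nonneg (jbr_pos i).le β)
  calc ∑ i ∈ range N, 1 / ((i : ℝ) + 1)
      ≤ ∑ i ∈ range N, 2 / jbr i ^ β := sum_le_sum fun i _ => hterm i
    _ = ∑ k ∈ (range N).map Nat.castEmbedding, 2 / jbr k ^ β := by
        rw [sum_map]; rfl
    _ ≤ ∑ k ∈ Icc (-(N : ℤ)) N, 2 / jbr k ^ β := by
        refine sum_le_sum_of_subset_of_nonneg (fun k hk => ?_) fun k _ _ => ?_
        · obtain ⟨i, hi, rfl⟩ := mem_map.1 hk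
          simp only [mem_range] at hi
          simp only [Nat.castEmbedding_apply, mem_Icc]
          omega
        · exact (two_div_jbr_rpow_pos β k).le

theorem renC_pow_four (α : ℝ) (N : ℕ) :
    renC α N ^ 4 = (∑ k ∈ Icc (-(N : ℤ)) N, 2 / jbr k ^ (4 * α))⁻¹ := by
  have hS : 0 ≤ ∑ k ∈ Icc (-(N : ℤ)) N, 2 / jbr k ^ (4 * α) :=
    sum_nonneg fun k _ => (two_div_jbr_rpow_pos _ k).le
  rw [renC, ← Real.rpow_natCast, ← Real.rpow_mul hS]
  norm_num [Real.rpow_neg_one]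

section PairSet

variable (N : ℕ) (n : ℤ)

theorem sum_pairSet_eq (F : ℤ → ℤ → ℝ) :
    ∑ p ∈ pairSet N n, F p.1 p.2 =
      ∑ k ∈ (Icc (-(N : ℤ)) N).filter (fun k => n - k ∈ Icc (-(N : ℤ)) N), F k (n - k) := by
  refine sum_nbij' Prod.fst (fun k => (k, n - k)) ?_ ?_ ?_ (fun _ _ => rfl) ?_ <;>
    simp only [pairSet, mem_filter, mem_product, mem_Icc, Prod.forall, Prod.mk.injEq, true_and]
  · intros; omega
  · intros; omega
  · intros; omega
  · intro a b h
    rw [← h.2, add_sub_cancel_left]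

theorem card_filter_sub_notMem_Icc_le :
    #((Icc (-(N : ℤ)) N).filter (fun k => n - k ∉ Icc (-(N : ℤ)) N)) ≤ n.natAbs := by
  have hsub : (Icc (-(N : ℤ)) N).filter (fun k => n - k ∉ Icc (-(N : ℤ)) N) ⊆
      Ico (-(N : ℤ)) (n - N) ∪ Ioc (n + N) N := by
    intro k hk
    simp only [mem_filter, mem_Icc, mem_union, mem_Ico, mem_Ioc] at hk ⊢
    omega
  have hunion := card_union_le (Ico (-(N : ℤ)) (n - N)) (Ioc (n + N) N)
  rw [Int.card_Ico, Int.card_Ioc] at hunion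
  have := card_le_card hsub
  omega

theorem abs_sum_Icc_sub_sum_pairSet_le {F : ℤ → ℤ → ℝ} {c : ℝ} (hF : ∀ a b, |F a b| ≤ c) :
    |∑ k ∈ Icc (-(N : ℤ)) N, F k (n - k) - ∑ p ∈ pairSet N n, F p.1 p.2| ≤ c * n.natAbs := by
  rw [sum_pairSet_eq, ← sum_filter_add_sum_filter_not (Icc (-(N : ℤ)) N)
    (fun k => n - k ∈ Icc (-(N : ℤ)) N), add_sub_cancel_left]
  calc _ ≤ ∑ k ∈ (Icc (-(N : ℤ)) N).filter (fun k => n - k ∉ Icc (-(N : ℤ)) N), |F k (n - k)| :=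
        abs_sum_le_sum_abs _ _
    _ ≤ #((Icc (-(N : ℤ)) N).filter (fun k => n - k ∉ Icc (-(N : ℤ)) N)) • c :=
        sum_le_card_nsmul _ _ _ fun k _ => hF k (n - k)
    _ ≤ c * n.natAbs := by
        rw [nsmul_eq_mul, mul_comm]
        exact mul_le_mul_of_nonneg_left (by exact_mod_cast card_filter_sub_notMem_Icc_le N n)
          ((abs_nonneg _).trans (hF 0 0))

end PairSet

/-- For `0 < α < 1/4` and fixed `n ∈ ℤ`, the limit
`c_α = lim_N C_{α,N}⁴ ∑_{n₁+n₂=n, |n₁|,|n₂|≤N} 2⟨n₁⟩^{-2α}⟨n₂⟩^{-2α}` exists and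
equals `1`, independently of `n`. -/
theorem renC_limit_constant_eq_one (α : ℝ) (hα₁ : 0 < α) (hα₂ : α < 1 / 4) (n : ℤ) :
    Tendsto (fun N : ℕ =>
      renC α N ^ 4 * ∑ p ∈ pairSet N n, 2 * jbr p.1 ^ (-(2 * α)) * jbr p.2 ^ (-(2 * α)))
      atTop (nhds 1) := by
  set F : ℤ → ℤ → ℝ := fun a b => 2 * jbr a ^ (-(2 * α)) * jbr b ^ (-(2 * α))
  set S : ℕ → ℝ := fun N => ∑ k ∈ Icc (-(N : ℤ)) N, 2 / jbr k ^ (4 * α)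
  have hS : Tendsto S atTop atTop := tendsto_sum_Icc_two_div_jbr_rpow_atTop (by linarith)
  have hbulk : (fun N : ℕ => ∑ k ∈ Icc (-(N : ℤ)) N, F k (n - k)) ~[atTop] S := by
    simp only [F, two_mul_jbr_rpow_mul_jbr_rpow]
    refine isEquivalent_sum_mul_of_tendsto_one (fun k => (two_div_jbr_rpow_pos _ k).le) ?_ hS
    simpa using (tendsto_jbr_div_jbr_sub n).rpow_const (p := 2 * α) (Or.inl one_ne_zero)
  have hboundary : (fun N : ℕ => ∑ p ∈ pairSet N n, F p.1 p.2 -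
      ∑ k ∈ Icc (-(N : ℤ)) N, F k (n - k)) =O[atTop] fun _ => (1 : ℝ) :=
    IsBigO.of_bound (2 * n.natAbs) (Eventually.of_forall fun N => by
      simpa [abs_sub_comm] using abs_sum_Icc_sub_sum_pairSet_le N n
        (abs_two_mul_jbr_rpow_mul_jbr_rpow_le hα₁.le))
  have hpair : (fun N => ∑ p ∈ pairSet N n, F p.1 p.2) ~[atTop] S :=
    (isEquivalent_of_sub_isBigO_one hboundary (hbulk.symm.tendsto_atTop hS)).trans hbulk
  simp only [renC_pow_four, ← div_eq_inv_mul]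
  exact (isEquivalent_iff_tendsto_one ((hS.eventually_gt_atTop 0).mono fun _ => ne_of_gt)).1 hpair
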